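/- Let N ≥ 2. An N×N Hermitian matrix X satisfies trace(ψ_{m,n} ψ_{m,n}* · X) = 0 for all m = 1,…,4 and n = 1,…,N−1 if and only if X[n,n] = 0 for all n = 1,…,N and X[1,n] = 0 (equivalently X[n,1] = 0) for all n = 1,…,N. (Lemma 4, part Ψ: characterization of the null space of the measurement map A_Ψ on Hermitian matrices.) -/

import Mathlib

open Complex Matrix MeasureTheory

noncomputable section

/-- α = √((1 − 1/√3)/2) -/
def alph : ℂ := (Real.sqrt ((1 - 1/Real.sqrt 3)/2) : ℝ)

/-- β = e^{i5π/4}·√((1 + 1/√3)/2) -/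
def beta : ℂ := Complex.exp (Complex.I * (5 * (Real.pi : ℂ) / 4)) *
  (Real.sqrt ((1 + 1/Real.sqrt 3)/2) : ℝ)

/-- the four frame vectors a₁ = (α,β), a₂ = (β,α), a₃ = (α,−β), a₄ = (−β,α) in ℂ² -/
def coef : Fin 4 → Fin 2 → ℂ := ![![alph, beta], ![beta, alph], ![alph, -beta], ![-beta, alph]]

/-- inner product ⟨x,y⟩ = Σ x[n]·conj(y[n]) -/
def inn {N : ℕ} (x y : Fin N → ℂ) : ℂ := ∑ i, x i * (starRingEnd ℂ) (y i)

/-- Euclidean norm ‖x‖ = √⟨x,x⟩ -/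
def nrm {N : ℕ} (x : Fin N → ℂ) : ℝ := Real.sqrt (inn x x).re

/-- outer product x y* -/
def outer {N : ℕ} (x y : Fin N → ℂ) : Matrix (Fin N) (Fin N) ℂ :=
  fun i j => x i * (starRingEnd ℂ) (y j)

/-- measurement vectors φ_{m,n} (0-based n: nonzero entries at positions n and n+1) -/
def phiv (N : ℕ) (m : Fin 4) (n : ℕ) : Fin N → ℂ :=
  fun i => if (i : ℕ) = n then coef m 0 else if (i : ℕ) = n + 1 then coef m 1 else 0

/-- measurement vectors ψ_{m,n} (0-based n: nonzero entries at positions 0 and n+1) -/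
def psiv (N : ℕ) (m : Fin 4) (n : ℕ) : Fin N → ℂ :=
  fun i => if (i : ℕ) = 0 then coef m 0 else if (i : ℕ) = n + 1 then coef m 1 else 0

/-- Hilbert–Schmidt inner product ⟨X,Y⟩ = trace(Y*X) -/
def hs {N : ℕ} (X Y : Matrix (Fin N) (Fin N) ℂ) : ℂ := Matrix.trace (Yᴴ * X)

/-- Frobenius (Hilbert–Schmidt) norm -/
def frob {N : ℕ} (X : Matrix (Fin N) (Fin N) ℂ) : ℝ := Real.sqrt (Matrix.trace (Xᴴ * X)).re

/-- spectral norm (largest singular value) -/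
def specNorm {N : ℕ} (A : Matrix (Fin N) (Fin N) ℂ) : ℝ :=
  sSup {r : ℝ | ∃ v : Fin N → ℂ, nrm v ≤ 1 ∧ r = nrm (A.mulVec v)}

/-! `ψ_{m,n}` is supported on the coordinates `1` and `n + 1`, so `trace (ψ ψ* X)` only sees the
`2 × 2` principal submatrix `Y` of `X` on these coordinates, where it is the value at the frame
vectors `(α, β), (β, α), (α, -β), (-β, α)` of the form `v ↦ trace (v v* Y)`. Sums and differences of
the four equations isolate `Y₁₁ ± Y₂₂` and `Y₂₁ ± Y₁₂`, with coefficients `|α|² ± |β|²`,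
`2 Re (α β̄)` and `2 i Im (α β̄)`; these are nonzero, so the four measurements vanish iff `Y = 0`. -/

open ComplexConjugate
open scoped Real

def frame (a b : ℂ) : Fin 4 → Fin 2 → ℂ := ![![a, b], ![b, a], ![a, -b], ![-b, a]]

lemma trace_outer_mul_fin_two (v : Fin 2 → ℂ) (Y : Matrix (Fin 2) (Fin 2) ℂ) :
    trace (outer v v * Y) = v 0 * conj (v 0) * Y 0 0 + v 0 * conj (v 1) * Y 1 0
      + v 1 * conj (v 0) * Y 0 1 + v 1 * conj (v 1) * Y 1 1 := by
  simp only [trace, diag, mul_apply, outer, Fin.sum_univ_two]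
  ring

lemma eq_zero_of_forall_trace_outer_frame_mul_eq_zero {a b : ℂ} (hab : ‖a‖ ≠ ‖b‖)
    (hre : (a * conj b).re ≠ 0) (him : (a * conj b).im ≠ 0) {Y : Matrix (Fin 2) (Fin 2) ℂ}
    (hY : ∀ m, trace (outer (frame a b m) (frame a b m) * Y) = 0) : Y = 0 := by
  have e0 := hY 0
  have e1 := hY 1
  have e2 := hY 2
  have e3 := hY 3
  simp only [trace_outer_mul_fin_two, frame, Matrix.cons_val, map_neg] at e0 e1 e2 e3
  have hsq : ‖a‖ ^ 2 ≠ ‖b‖ ^ 2 := (sq_eq_sq₀ (norm_nonneg a) (norm_nonneg b)).not.mpr hab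
  have hsub : a * conj a - b * conj b ≠ 0 := by
    rw [mul_conj', mul_conj', sub_ne_zero]; exact_mod_cast hsq
  have hadd : a * conj a + b * conj b ≠ 0 := by
    rw [mul_conj', mul_conj']
    exact_mod_cast fun h => hsq (by linarith [sq_nonneg ‖a‖, sq_nonneg ‖b‖] : ‖a‖ ^ 2 = ‖b‖ ^ 2)
  have hc : b * conj a = conj (a * conj b) := by simp [mul_comm]
  have hcadd : a * conj b + b * conj a ≠ 0 := by
    rw [hc, add_conj]; exact_mod_cast mul_ne_zero two_ne_zero hre
  have hcsub : a * conj b - b * conj a ≠ 0 := by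
    rw [hc, sub_conj]; exact mul_ne_zero (by exact_mod_cast mul_ne_zero two_ne_zero him) I_ne_zero
  have h1 : Y 0 0 + Y 1 1 = 0 := (mul_eq_zero.1
    (by linear_combination (e0 + e1 + e2 + e3) / 2 :
      (a * conj a + b * conj b) * (Y 0 0 + Y 1 1) = 0)).resolve_left hadd
  have h2 : Y 0 0 - Y 1 1 = 0 := (mul_eq_zero.1
    (by linear_combination (e0 - e1 + e2 - e3) / 2 :
      (a * conj a - b * conj b) * (Y 0 0 - Y 1 1) = 0)).resolve_left hsub
  have h3 : Y 1 0 + Y 0 1 = 0 := (mul_eq_zero.1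
    (by linear_combination (e0 + e1 - e2 - e3) / 2 :
      (a * conj b + b * conj a) * (Y 1 0 + Y 0 1) = 0)).resolve_left hcadd
  have h4 : Y 1 0 - Y 0 1 = 0 := (mul_eq_zero.1
    (by linear_combination (e0 - e1 - e2 + e3) / 2 :
      (a * conj b - b * conj a) * (Y 1 0 - Y 0 1) = 0)).resolve_left hcsub
  ext i j
  fin_cases i <;> fin_cases j
  · show Y 0 0 = 0; linear_combination (h1 + h2) / 2
  · show Y 0 1 = 0; linear_combination (h3 - h4) / 2
  · show Y 1 0 = 0; linear_combination (h3 + h4) / 2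
  · show Y 1 1 = 0; linear_combination (h1 - h2) / 2

lemma one_div_sqrt_three_mem_Ioo : 1 / √3 ∈ Set.Ioo (0 : ℝ) 1 := by
  have h : 1 < √3 := Real.lt_sqrt_of_sq_lt (by norm_num)
  exact ⟨by positivity, (div_lt_one (by positivity)).2 h⟩

lemma beta_eq_exp_mul : beta = exp (↑(5 * π / 4) * I) * ↑√((1 + 1 / √3) / 2) := by
  rw [beta]; push_cast; ring_nf

lemma norm_alph_lt_norm_beta : ‖alph‖ < ‖beta‖ := by
  obtain ⟨h0, h1⟩ := one_div_sqrt_three_mem_Ioo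
  rw [beta_eq_exp_mul, norm_mul, norm_exp_ofReal_mul_I, one_mul, alph, norm_real, norm_real,
    Real.norm_of_nonneg (Real.sqrt_nonneg _), Real.norm_of_nonneg (Real.sqrt_nonneg _)]
  exact Real.sqrt_lt_sqrt (by linarith) (by linarith)

lemma alph_mul_conj_beta : alph * conj beta =
    ↑(√((1 - 1 / √3) / 2) * √((1 + 1 / √3) / 2)) * exp (↑(-(5 * π / 4)) * I) := by
  rw [beta_eq_exp_mul, alph, map_mul, ← exp_conj]
  simp only [map_mul, conj_ofReal, conj_I]
  push_cast
  ring_nf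

lemma sqrt_one_sub_mul_sqrt_one_add_pos : 0 < √((1 - 1 / √3) / 2) * √((1 + 1 / √3) / 2) := by
  obtain ⟨h0, h1⟩ := one_div_sqrt_three_mem_Ioo
  exact mul_pos (Real.sqrt_pos.2 (by linarith)) (Real.sqrt_pos.2 (by linarith))

lemma re_alph_mul_conj_beta_ne_zero : (alph * conj beta).re ≠ 0 := by
  rw [alph_mul_conj_beta, re_ofReal_mul, exp_ofReal_mul_I_re, Real.cos_neg,
    show 5 * π / 4 = π / 4 + π by ring, Real.cos_add_pi, Real.cos_pi_div_four]
  have := sqrt_one_sub_mul_sqrt_one_add_pos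
  have : 0 < √2 := by positivity
  nlinarith

lemma im_alph_mul_conj_beta_ne_zero : (alph * conj beta).im ≠ 0 := by
  rw [alph_mul_conj_beta, im_ofReal_mul, exp_ofReal_mul_I_im, Real.sin_neg,
    show 5 * π / 4 = π / 4 + π by ring, Real.sin_add_pi, Real.sin_pi_div_four]
  have := sqrt_one_sub_mul_sqrt_one_add_pos
  have : 0 < √2 := by positivity
  nlinarith

lemma trace_outer_mul_eq_trace_outer_mul_submatrix {n N : ℕ} {e : Fin n → Fin N}
    (he : Function.Injective e) {x : Fin N → ℂ} (hx : ∀ i ∉ Set.range e, x i = 0)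
    (X : Matrix (Fin N) (Fin N) ℂ) :
    trace (outer x x * X) = trace (outer (x ∘ e) (x ∘ e) * X.submatrix e e) := by
  simp only [trace, diag, mul_apply, outer, submatrix_apply, Function.comp_apply]
  refine (Fintype.sum_of_injective e he _ _ (fun i hi => ?_) fun i => ?_).symm
  · simp [hx i hi]
  · exact Fintype.sum_of_injective e he _ _ (fun j hj => by simp [hx j hj]) fun j => rfl

lemma submatrix_vecCons_eq_zero_iff {ι α : Type*} [Zero α] (X : Matrix ι ι α) (i j : ι) :
    X.submatrix ![i, j] ![i, j] = 0 ↔ X i i = 0 ∧ X i j = 0 ∧ X j i = 0 ∧ X j j = 0 := by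
  rw [← Matrix.ext_iff]
  simp [Fin.forall_fin_two, and_assoc]

lemma forall_trace_outer_psiv_mul_eq_zero_iff {N n : ℕ} (hn : n + 1 < N)
    (X : Matrix (Fin N) (Fin N) ℂ) :
    (∀ m, trace (outer (psiv N m n) (psiv N m n) * X) = 0) ↔
      X.submatrix ![⟨0, by omega⟩, ⟨n + 1, hn⟩] ![⟨0, by omega⟩, ⟨n + 1, hn⟩] = 0 := by
  set e : Fin 2 → Fin N := ![⟨0, by omega⟩, ⟨n + 1, hn⟩]
  have he : Function.Injective e := by
    intro i j; fin_cases i <;> fin_cases j <;> simp [e, Fin.ext_iff]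
  have hψ : ∀ m, psiv N m n ∘ e = frame alph beta m := by
    intro m; ext i; fin_cases i <;> simp [e, psiv, frame, coef]
  have hψ0 : ∀ m, ∀ i ∉ Set.range e, psiv N m n i = 0 := by
    intro m i hi
    have h0 : (i : ℕ) ≠ 0 := fun h => hi ⟨0, Fin.ext h.symm⟩
    have h1 : (i : ℕ) ≠ n + 1 := fun h => hi ⟨1, Fin.ext h.symm⟩
    simp [psiv, h0, h1]
  simp only [trace_outer_mul_eq_trace_outer_mul_submatrix he (hψ0 _), hψ]
  exact ⟨eq_zero_of_forall_trace_outer_frame_mul_eq_zero norm_alph_lt_norm_beta.ne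
    re_alph_mul_conj_beta_ne_zero im_alph_mul_conj_beta_ne_zero, fun h m => by simp [h]⟩

/-- Lemma 4 (part Ψ): a Hermitian matrix X lies in the null space of A_Ψ iff its
diagonal entries and its first row vanish. -/
theorem null_space_Psi (N : ℕ) (hN : 2 ≤ N) (X : Matrix (Fin N) (Fin N) ℂ)
    (hX : X.IsHermitian) :
    (∀ (m : Fin 4) (n : ℕ), n + 1 < N →
        Matrix.trace (outer (psiv N m n) (psiv N m n) * X) = 0) ↔
    ((∀ i : Fin N, X i i = 0) ∧ ∀ i : Fin N, X ⟨0, by omega⟩ i = 0) := by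
  have key n (hn : n + 1 < N) := (forall_trace_outer_psiv_mul_eq_zero_iff hn X).trans
    (submatrix_vecCons_eq_zero_iff X _ _)
  constructor
  · intro h
    have hk n (hn : n + 1 < N) := (key n hn).1 fun m => h m n hn
    refine ⟨fun i => ?_, fun i => ?_⟩ <;> rcases i with ⟨_ | n, hi⟩
    · exact (hk 0 (by omega)).1
    · exact (hk n hi).2.2.2
    · exact (hk 0 (by omega)).1
    · exact (hk n hi).2.1
  · rintro ⟨hdiag, hrow⟩ m n hn
    refine (key n hn).2 ⟨hdiag _, hrow _, ?_, hdiag _⟩ m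
    rw [← hX.apply, hrow, star_zero]
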